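/- Let p be an odd prime. Then for every u ∈ Z_p^p, D^p(u) = 2·u, where D is the Ducci map on Z_p^p. Consequently P_p(p) = p·δ, where δ is the multiplicative order of 2 mod p. -/

import Mathlib

def ducci {m n : ℕ} [NeZero n] (u : Fin n → ZMod m) : Fin n → ZMod m :=
  fun i => u i + u (i + 1)

/-!
Write `D = 1 + S` with `S` the cyclic shift `u ↦ (i ↦ u (i + 1))`. Since `1` and `S` commute,
`D^k u i = ∑ₛ C(k, s) u (i + s)`. For `k = p` every middle binomial vanishes mod `p` and `S^p = 1`,
so `D^p = 2`; hence `D^(pq + r) = 2^q D^r`. For `r < p` the coordinates of `D^r e`, with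
`e = (0, …, 0, 1)`, are `C(r, p - 1 - j)`: coordinate `p - 2` is `r` and coordinate `p - 1` is `1`.
So `D^(pq + r) e = e` forces `r = 0` (as `2` is a unit) and then `2^q = 1`: the periods of `e`
are exactly the multiples of `p · ord(2)`.
-/

open Finset Function Fin.NatCast

def ducciBasic (m n : ℕ) : Fin n → ZMod m := fun i => if i.val = n - 1 then 1 else 0

section General

variable {m n : ℕ} [NeZero n]

def cyclicShift : Module.End (ZMod m) (Fin n → ZMod m) :=
  LinearMap.funLeft (ZMod m) (ZMod m) (· + 1)

theorem cyclicShift_pow_apply (s : ℕ) (u : Fin n → ZMod m) (i : Fin n) :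
    (cyclicShift ^ s) u i = u (i + s) := by
  induction s generalizing u with
  | zero => simp
  | succ s ih =>
    rw [pow_succ, Module.End.mul_apply, ih, Nat.cast_succ, ← add_assoc]
    rfl

theorem ducci_iterate_eq_coe_pow (k : ℕ) :
    (ducci^[k] : (Fin n → ZMod m) → Fin n → ZMod m) = ⇑((1 + cyclicShift) ^ k) := by
  rw [Module.End.coe_pow]
  rfl

theorem ducci_iterate_apply (k : ℕ) (u : Fin n → ZMod m) (i : Fin n) :
    ducci^[k] u i = ∑ s ∈ range (k + 1), (k.choose s : ZMod m) * u (i + s) := by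
  rw [ducci_iterate_eq_coe_pow, add_comm, (Commute.one_right _).add_pow]
  simp [cyclicShift_pow_apply, mul_comm]

theorem ducci_iterate_smul (k : ℕ) (c : ZMod m) (u : Fin n → ZMod m) :
    ducci^[k] (c • u) = c • ducci^[k] u := by
  rw [ducci_iterate_eq_coe_pow, map_smul]

theorem Fin.val_add_natCast_eq_sub_one_iff (j : Fin n) {s : ℕ} (hs : s < n) :
    (j + (s : Fin n)).val = n - 1 ↔ s = n - 1 - j := by
  rw [Fin.val_add, Fin.val_natCast, Nat.mod_eq_of_lt hs, Nat.add_mod_eq_ite,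
    Nat.mod_eq_of_lt j.isLt, Nat.mod_eq_of_lt hs]
  split_ifs <;> omega

theorem ducci_iterate_ducciBasic_apply {r : ℕ} (hr : r < n) (j : Fin n) :
    ducci^[r] (ducciBasic m n) j = (r.choose (n - 1 - j) : ZMod m) := by
  have hterm : ∀ s ∈ range (r + 1), (r.choose s : ZMod m) * ducciBasic m n (j + s) =
      if n - 1 - j = s then (r.choose s : ZMod m) else 0 := fun s hs => by
    have hsn : s < n := by rw [mem_range] at hs; omega
    simp only [ducciBasic, Fin.val_add_natCast_eq_sub_one_iff j hsn, eq_comm (a := s)]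
    split_ifs <;> simp
  rw [ducci_iterate_apply, sum_congr rfl hterm, sum_ite_eq]
  split_ifs with h
  · rfl
  · rw [mem_range] at h
    rw [Nat.choose_eq_zero_of_lt (by omega), Nat.cast_zero]

end General

section Prime

variable {p : ℕ} [Fact p.Prime]

theorem ducci_iterate_prime (u : Fin p → ZMod p) : ducci^[p] u = (2 : ZMod p) • u := by
  have hp : p.Prime := Fact.out
  funext i
  rw [ducci_iterate_apply, sum_range_succ, sum_eq_single_of_mem 0 (mem_range.2 hp.pos)]
  · simp [two_mul]
  · intro s hs hs0
    rw [(ZMod.natCast_eq_zero_iff _ _).2 (hp.dvd_choose_self hs0 (mem_range.1 hs)), zero_mul]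

theorem ducci_iterate_prime_mul (q : ℕ) (u : Fin p → ZMod p) :
    ducci^[p * q] u = (2 : ZMod p) ^ q • u := by
  induction q generalizing u with
  | zero => simp
  | succ q ih => rw [mul_add_one, iterate_add_apply, ducci_iterate_prime, ih, smul_smul, pow_succ]

theorem isPeriodicPt_ducci_ducciBasic_iff (hodd : Odd p) (β : ℕ) :
    IsPeriodicPt ducci β (ducciBasic p p) ↔ p * orderOf (2 : ZMod p) ∣ β := by
  have hp : p.Prime := Fact.out
  constructor
  · obtain ⟨q, r, hr, rfl⟩ : ∃ q r, r < p ∧ β = p * q + r :=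
      ⟨β / p, β % p, Nat.mod_lt _ hp.pos, (Nat.div_add_mod β p).symm⟩
    intro hβ
    have heq : (2 : ZMod p) ^ q • ducci^[r] (ducciBasic p p) = ducciBasic p p := by
      rwa [IsPeriodicPt, IsFixedPt, iterate_add_apply, ducci_iterate_prime_mul] at hβ
    have hr0 : r = 0 := by
      have h2 : (2 : ZMod p) ≠ 0 := Ring.two_ne_zero <| by
        rw [ZMod.ringChar_zmod_n]; rintro rfl; exact Nat.not_odd_iff_even.2 even_two hodd
      have hp2 := hp.two_le
      have hpen := congrFun heq ⟨p - 2, by omega⟩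
      simp only [Pi.smul_apply, smul_eq_mul, ducci_iterate_ducciBasic_apply hr, ducciBasic] at hpen
      rw [show p - 1 - (p - 2) = 1 by omega, Nat.choose_one_right,
        if_neg (show p - 2 ≠ p - 1 by omega), mul_eq_zero, or_iff_right (pow_ne_zero _ h2),
        ZMod.natCast_eq_zero_iff] at hpen
      exact Nat.eq_zero_of_dvd_of_lt hpen hr
    subst hr0
    have hlast := congrFun heq ⟨p - 1, by omega⟩
    simp only [iterate_zero_apply, Pi.smul_apply, smul_eq_mul, ducciBasic, if_pos, mul_one] at hlast
    exact mul_dvd_mul_left p (orderOf_dvd_of_pow_eq_one hlast)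
  · rintro ⟨k, rfl⟩
    rw [IsPeriodicPt, IsFixedPt, mul_assoc, ducci_iterate_prime_mul, pow_mul, pow_orderOf_eq_one,
      one_pow, one_smul]

end Prime

theorem ducci_pow_p_and_max_period (p : ℕ) [Fact p.Prime] (hodd : Odd p) :
    (∀ u : Fin p → ZMod p, ducci^[p] u = fun i => 2 * u i) ∧
    sInf {β : ℕ | 0 < β ∧
        ducci^[β] (fun i : Fin p => if i.val = p - 1 then (1 : ZMod p) else 0) =
          fun i => if i.val = p - 1 then 1 else 0} =
      p * orderOf (2 : ZMod p) := by
  refine ⟨ducci_iterate_prime, ?_⟩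
  have hperiod := isPeriodicPt_ducci_ducciBasic_iff hodd
  calc _ = minimalPeriod ducci (ducciBasic p p) := (minimalPeriod_eq_sInf_n_pos_IsPeriodicPt).symm
    _ = p * orderOf (2 : ZMod p) := Nat.dvd_antisymm
      ((hperiod _).2 dvd_rfl).minimalPeriod_dvd ((hperiod _).1 (isPeriodicPt_minimalPeriod _ _))
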